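/- Let n be a natural number. The group of units M* of the monoid (M_n(ℤ), *) is exactly the set { [a_ij] ∈ M_n(ℤ) : a_ii ∈ {0, −1} for all 1 ≤ i ≤ n }. Moreover, for 𝔞 ∈ M_n(ℤ), the translation endomorphism t_𝔞 is an automorphism of G_n if and only if 𝔞 ∈ M*. -/

import Mathlib

/-- The defining relations of the combinatorial Hantzsche-Wendt group `G_n`:
`x_i⁻¹ x_j² x_i = x_j⁻²` for all `i ≠ j`, written as relators. -/
def HWrels (n : ℕ) : Set (FreeGroup (Fin n)) :=
  {r | ∃ i j : Fin n, i ≠ j ∧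
    r = (FreeGroup.of i)⁻¹ * FreeGroup.of j ^ 2 * FreeGroup.of i * FreeGroup.of j ^ 2}

/-- The combinatorial Hantzsche-Wendt group `G_n`. -/
abbrev HW (n : ℕ) : Type := PresentedGroup (HWrels n)

/-- The generators `x_1, …, x_n` of `G_n`. -/
def x (n : ℕ) (i : Fin n) : HW n := PresentedGroup.of i

/-- A type synonym for `M = M_n(ℤ)`, carrying the monoid structure given by
`𝔞 * 𝔟 = [c_ij]` with `c_ij = a_ij + (1 + 2 a_jj) b_ij`. -/
def MM (n : ℕ) : Type := Matrix (Fin n) (Fin n) ℤ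

instance (n : ℕ) : Mul (MM n) :=
  ⟨fun 𝔞 𝔟 i j => 𝔞 i j + (1 + 2 * 𝔞 j j) * 𝔟 i j⟩

instance (n : ℕ) : One (MM n) := ⟨fun _ _ => (0 : ℤ)⟩

theorem MM.mul_apply {n : ℕ} (𝔞 𝔟 : MM n) (i j : Fin n) :
    (𝔞 * 𝔟) i j = 𝔞 i j + (1 + 2 * 𝔞 j j) * 𝔟 i j := rfl

theorem MM.one_apply {n : ℕ} (i j : Fin n) : (1 : MM n) i j = 0 := rfl

theorem MM.ext {n : ℕ} {𝔞 𝔟 : MM n} (h : ∀ i j, 𝔞 i j = 𝔟 i j) : 𝔞 = 𝔟 :=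
  funext fun i => funext fun j => h i j

instance (n : ℕ) : Monoid (MM n) where
  mul_assoc a b c := MM.ext fun i j => by
    simp only [MM.mul_apply]; ring
  one_mul a := MM.ext fun i j => by simp only [MM.mul_apply, MM.one_apply]; ring
  mul_one a := MM.ext fun i j => by simp only [MM.mul_apply, MM.one_apply]; ring

/-- For an `n × n` integer matrix `𝔞 = [a_ij]`, the element
`a_i = (x_1²)^{a_i1} ⋯ (x_n²)^{a_in}` of `A_n ≤ G_n`. -/
def aElt (n : ℕ) (𝔞 : MM n) (i : Fin n) : HW n :=
  ((List.finRange n).map fun j => (x n j ^ 2) ^ 𝔞 i j).prod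

/-!
The assignment `𝔞 ↦ t_𝔞` is multiplicative, `t_𝔡 ∘ t_𝔠 = t_{𝔡 * 𝔠}`, because the squares
`x_k²` commute with each other and `t_𝔡` sends `x_k²` to `(x_k²)^(1 + 2 d_kk)`; hence units of
`(M, *)` give automorphisms. The diagonal `𝔞 ↦ (1 + 2 a_ii)_i` is a monoid homomorphism to `ℤⁿ`,
and a matrix is a unit exactly when all these odd numbers are `±1`.

Conversely, suppose `t_𝔞` is onto and `t_𝔞 g = x_j²`. As `t_𝔞` is the identity modulo `A_n`,
`g ∈ A_n`. In the affine action of `G_n` on `ℤⁿ` (where `x_k²` translates by `2 e_k`), every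
element of `t_𝔞(A_n)` translates the `j`-th coordinate by a multiple of `2 (1 + 2 a_jj)`, while
`x_j²` translates it by `2`. So `1 + 2 a_jj = ±1`.
-/

theorem commute_sq_of_inv_mul_mul_eq_inv {G : Type*} [Group G] {a b : G}
    (h : a⁻¹ * b * a = b⁻¹) : Commute (a ^ 2) b := by
  have key : (a ^ 2)⁻¹ * (b * a ^ 2) = b := calc
    (a ^ 2)⁻¹ * (b * a ^ 2) = a⁻¹ * (a⁻¹ * b * a) * a := by simp only [sq]; group
    _ = a⁻¹ * b⁻¹ * a := by rw [h]
    _ = (a⁻¹ * b * a)⁻¹ := by group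
    _ = b := by rw [h, inv_inv]
  exact (inv_mul_eq_iff_eq_mul.1 key).symm

theorem List.prod_map_mul_of_commute {M ι : Type*} [Monoid M] {f g : ι → M}
    (h : ∀ i j, Commute (g i) (f j)) (l : List ι) :
    (l.map fun i => f i * g i).prod = (l.map f).prod * (l.map g).prod := by
  induction l with
  | nil => simp
  | cons a l ih =>
    have hga : Commute (g a) (l.map f).prod :=
      Commute.list_prod_right _ _ fun y hy => by
        obtain ⟨j, -, rfl⟩ := List.mem_map.1 hy
        exact h a j
    simp only [List.map_cons, List.prod_cons, ih, mul_assoc, hga.left_comm]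

theorem Subgroup.closure_normal_of_conj_mem {G : Type*} [Group G] {s t : Set G}
    (ht : closure t = ⊤)
    (h : ∀ a ∈ t, ∀ g ∈ s, a * g * a⁻¹ ∈ closure s ∧ a⁻¹ * g * a ∈ closure s) :
    (closure s).Normal := by
  rw [← normalizer_eq_top_iff, eq_top_iff, ← ht, closure_le]
  intro a ha
  rw [SetLike.mem_coe, mem_normalizer_iff_map_conj_eq]
  refine le_antisymm ?_ ?_
  · rw [MonoidHom.map_closure, closure_le]
    rintro _ ⟨g, hg, rfl⟩
    exact (h a ha g hg).1
  · rw [closure_le]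
    intro g hg
    exact ⟨a⁻¹ * g * a, (h a ha g hg).2, by simp [mul_assoc]⟩

def Equiv.Perm.displacementSubgroup {α : Type*} [AddCommGroup α] (S : AddSubgroup α) :
    Subgroup (Equiv.Perm α) where
  carrier := {p | ∀ v, p v - v ∈ S}
  one_mem' v := by simp
  mul_mem' {p q} hp hq v := by
    simpa [sub_add_sub_cancel] using S.add_mem (hp (q v)) (hq v)
  inv_mem' {p} hp v := by simpa using S.neg_mem (hp (p⁻¹ v))

theorem Equiv.addRight_mem_displacementSubgroup {α : Type*} [AddCommGroup α]
    {S : AddSubgroup α} {t : α} :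
    Equiv.addRight t ∈ Equiv.Perm.displacementSubgroup S ↔ t ∈ S := by
  change (∀ v, v + t - v ∈ S) ↔ t ∈ S
  simp

theorem Int.isUnit_one_add_two_mul_iff {a : ℤ} : IsUnit (1 + 2 * a) ↔ a = 0 ∨ a = -1 := by
  rw [Int.isUnit_iff]
  omega

namespace MM

variable {n : ℕ}

/-- The exponents in `t_𝔞 (x_i²) = (x_i²)^(1 + 2 a_ii)`. -/
def oddDiag (n : ℕ) : MM n →* (Fin n → ℤ) where
  toFun 𝔞 i := 1 + 2 * 𝔞 i i
  map_one' := by funext i; simp [MM.one_apply]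
  map_mul' 𝔞 𝔟 := by funext i; simp only [MM.mul_apply, Pi.mul_apply]; ring

theorem isUnit_iff_forall_isUnit_one_add_two_mul_diag {𝔞 : MM n} :
    IsUnit 𝔞 ↔ ∀ i, IsUnit (1 + 2 * 𝔞 i i) := by
  refine ⟨fun h => Pi.isUnit_iff.1 (h.map (oddDiag n)), fun h => ?_⟩
  have hsq : ∀ j, (1 + 2 * 𝔞 j j) * (1 + 2 * 𝔞 j j) = 1 := fun j => Int.isUnit_mul_self (h j)
  -- `b_ij = -(1 + 2 a_jj)⁻¹ a_ij`, and `1 + 2 a_jj = ±1` is its own inverse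
  let 𝔟 : MM n := fun i j => -(1 + 2 * 𝔞 j j) * 𝔞 i j
  have h𝔞𝔟 : 𝔞 * 𝔟 = 1 := MM.ext fun i j => by
    show 𝔞 i j + (1 + 2 * 𝔞 j j) * (-(1 + 2 * 𝔞 j j) * 𝔞 i j) = 0
    linear_combination (-𝔞 i j) * hsq j
  have h𝔟𝔞 : 𝔟 * 𝔞 = 1 := MM.ext fun i j => by
    show -(1 + 2 * 𝔞 j j) * 𝔞 i j + (1 + 2 * (-(1 + 2 * 𝔞 j j) * 𝔞 j j)) * 𝔞 i j = 0
    linear_combination (-𝔞 i j) * hsq j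
  exact ⟨⟨𝔞, 𝔟, h𝔞𝔟, h𝔟𝔞⟩, rfl⟩

end MM

namespace HW

variable {n : ℕ}

theorem x_inv_mul_sq_mul_x {i j : Fin n} (h : i ≠ j) :
    (x n i)⁻¹ * x n j ^ 2 * x n i = (x n j ^ 2)⁻¹ := by
  rw [← mul_eq_one_iff_eq_inv]
  simpa [x, PresentedGroup.of] using PresentedGroup.one_of_mem (rels := HWrels n) ⟨i, j, h, rfl⟩

theorem x_inv_mul_sq_zpow_mul_x {i j : Fin n} (h : i ≠ j) (m : ℤ) :
    (x n i)⁻¹ * (x n j ^ 2) ^ m * x n i = ((x n j ^ 2) ^ m)⁻¹ := by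
  have := conj_zpow (i := m) (a := (x n i)⁻¹) (b := x n j ^ 2)
  rw [inv_inv, x_inv_mul_sq_mul_x h, inv_zpow] at this
  exact this.symm

theorem commute_sq_sq (i j : Fin n) : Commute (x n i ^ 2) (x n j ^ 2) := by
  rcases eq_or_ne i j with rfl | h
  · exact Commute.refl _
  · exact commute_sq_of_inv_mul_mul_eq_inv (x_inv_mul_sq_mul_x h)

def sqPow (c : Fin n → ℤ) : HW n :=
  ((List.finRange n).map fun j => (x n j ^ 2) ^ c j).prod

theorem aElt_eq_sqPow (𝔞 : MM n) (i : Fin n) : aElt n 𝔞 i = sqPow (𝔞 i) := rfl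

theorem sqPow_zero : sqPow (0 : Fin n → ℤ) = 1 :=
  List.prod_eq_one (by simp)

theorem sqPow_add (c d : Fin n → ℤ) : sqPow (c + d) = sqPow c * sqPow d := by
  simp only [sqPow, Pi.add_apply, zpow_add]
  exact List.prod_map_mul_of_commute (fun i j => (commute_sq_sq i j).zpow_zpow _ _) _

theorem sqPow_single (j : Fin n) (m : ℤ) : sqPow (Pi.single j m) = (x n j ^ 2) ^ m := by
  rw [sqPow, List.prod_map_eq_pow_single j _ fun k hk _ => by simp [hk], List.count_finRange,
    pow_one, Pi.single_eq_same]

theorem commute_sq_zpow_sqPow (j : Fin n) (m : ℤ) (c : Fin n → ℤ) :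
    Commute ((x n j ^ 2) ^ m) (sqPow c) :=
  Commute.list_prod_right _ _ fun y hy => by
    obtain ⟨k, -, rfl⟩ := List.mem_map.1 hy
    exact (commute_sq_sq j k).zpow_zpow _ _

theorem map_sqPow (φ : HW n →* HW n) {ε : Fin n → ℤ}
    (hφ : ∀ k, φ (x n k ^ 2) = (x n k ^ 2) ^ ε k) (c : Fin n → ℤ) :
    φ (sqPow c) = sqPow (ε * c) := by
  simp only [sqPow, map_list_prod, List.map_map]
  congr 1
  refine List.map_congr_left fun k _ => ?_
  simp only [Function.comp_apply, map_zpow, hφ, Pi.mul_apply, zpow_mul]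

theorem x_inv_mul_sqPow_mul_x (i : Fin n) (c : Fin n → ℤ) :
    (x n i)⁻¹ * sqPow c * x n i = sqPow ((fun k => if k = i then 1 else -1) * c) := by
  refine map_sqPow (MulAut.conj (x n i)⁻¹).toMonoidHom (fun k => ?_) c
  simp only [MulEquiv.coe_toMonoidHom, MulAut.conj_apply, inv_inv]
  split_ifs with hk
  · subst hk; group
  · rw [x_inv_mul_sq_mul_x (Ne.symm hk), zpow_neg_one]

theorem sq_x_mul_sqPow (j : Fin n) (c : Fin n → ℤ) :
    (x n j * sqPow c) ^ 2 = (x n j ^ 2) ^ (1 + 2 * c j) := calc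
  (x n j * sqPow c) ^ 2 = x n j ^ 2 * ((x n j)⁻¹ * sqPow c * x n j * sqPow c) := by
    simp only [sq]; group
  _ = x n j ^ 2 * sqPow (Pi.single j (2 * c j)) := by
    rw [x_inv_mul_sqPow_mul_x, ← sqPow_add]
    congr 2
    funext k
    rcases eq_or_ne k j with rfl | hk
    · simp only [Pi.add_apply, Pi.mul_apply, if_true, Pi.single_eq_same]; ring
    · simp [hk]
  _ = (x n j ^ 2) ^ (1 + 2 * c j) := by rw [sqPow_single, zpow_add, zpow_one]

theorem x_mul_sqPow_relator_eq_one (c d : Fin n → ℤ) {i j : Fin n} (h : i ≠ j) :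
    (x n i * sqPow c)⁻¹ * (x n j * sqPow d) ^ 2 * (x n i * sqPow c) *
      (x n j * sqPow d) ^ 2 = 1 := by
  rw [sq_x_mul_sqPow]
  set y := (x n j ^ 2) ^ (1 + 2 * d j)
  have hy : Commute y⁻¹ (sqPow c) := (commute_sq_zpow_sqPow _ _ c).inv_left
  calc (x n i * sqPow c)⁻¹ * y * (x n i * sqPow c) * y
      = (sqPow c)⁻¹ * ((x n i)⁻¹ * y * x n i) * sqPow c * y := by group
    _ = 1 := by
      rw [x_inv_mul_sq_zpow_mul_x h, mul_assoc _ y⁻¹, hy.eq, inv_mul_cancel_left,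
        inv_mul_cancel]

def transl (𝔞 : MM n) : HW n →* HW n :=
  PresentedGroup.toGroup (f := fun i => x n i * sqPow (𝔞 i)) <| by
    rintro _ ⟨i, j, h, rfl⟩
    simpa using x_mul_sqPow_relator_eq_one (𝔞 i) (𝔞 j) h

theorem transl_x (𝔞 : MM n) (i : Fin n) : transl 𝔞 (x n i) = x n i * aElt n 𝔞 i :=
  PresentedGroup.toGroup.of _

theorem eq_transl {𝔞 : MM n} {f : HW n →* HW n} (hf : ∀ i, f (x n i) = x n i * aElt n 𝔞 i) :
    f = transl 𝔞 :=
  PresentedGroup.ext fun i => (hf i).trans (transl_x 𝔞 i).symm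

theorem transl_sq (𝔞 : MM n) (k : Fin n) :
    transl 𝔞 (x n k ^ 2) = (x n k ^ 2) ^ (1 + 2 * 𝔞 k k) := by
  rw [map_pow, transl_x, aElt_eq_sqPow, sq_x_mul_sqPow]

theorem transl_one : transl (1 : MM n) = MonoidHom.id (HW n) :=
  PresentedGroup.ext fun i => by
    change transl 1 (x n i) = x n i
    rw [transl_x, aElt_eq_sqPow, show (1 : MM n) i = 0 from rfl, sqPow_zero, mul_one]

theorem transl_mul (𝔡 𝔠 : MM n) : transl (𝔡 * 𝔠) = (transl 𝔡).comp (transl 𝔠) :=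
  PresentedGroup.ext fun i => by
    change transl _ (x n i) = transl 𝔡 (transl 𝔠 (x n i))
    rw [transl_x, transl_x, map_mul, transl_x, aElt_eq_sqPow, aElt_eq_sqPow, aElt_eq_sqPow,
      map_sqPow _ (transl_sq 𝔡), mul_assoc, ← sqPow_add]
    rfl

theorem bijective_transl_of_isUnit {𝔞 : MM n} (h : IsUnit 𝔞) : Function.Bijective (transl 𝔞) := by
  obtain ⟨u, rfl⟩ := h
  have inverse : ∀ 𝔟 𝔠 : MM n, 𝔟 * 𝔠 = 1 → Function.LeftInverse (transl 𝔟) (transl 𝔠) :=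
    fun 𝔟 𝔠 h z => by rw [← MonoidHom.comp_apply, ← transl_mul, h, transl_one, MonoidHom.id_apply]
  exact ⟨(inverse _ _ u.inv_mul).injective, (inverse _ _ u.mul_inv).surjective⟩

def sqSubgroup (n : ℕ) : Subgroup (HW n) := Subgroup.closure (Set.range fun k => x n k ^ 2)

theorem sq_mem_sqSubgroup (k : Fin n) : x n k ^ 2 ∈ sqSubgroup n :=
  Subgroup.subset_closure ⟨k, rfl⟩

theorem sqPow_mem_sqSubgroup (c : Fin n → ℤ) : sqPow c ∈ sqSubgroup n :=
  list_prod_mem fun y hy => by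
    obtain ⟨k, -, rfl⟩ := List.mem_map.1 hy
    exact zpow_mem (sq_mem_sqSubgroup k) _

instance sqSubgroup_normal : (sqSubgroup n).Normal := by
  refine Subgroup.closure_normal_of_conj_mem (PresentedGroup.closure_range_of _) ?_
  rintro _ ⟨i, rfl⟩ _ ⟨k, rfl⟩
  have hconj : (x n i)⁻¹ * x n k ^ 2 * x n i ∈ sqSubgroup n := by
    rcases eq_or_ne i k with rfl | hik
    · simpa [sq, mul_assoc] using sq_mem_sqSubgroup (n := n) i
    · rw [x_inv_mul_sq_mul_x hik]
      exact inv_mem (sq_mem_sqSubgroup k)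
  have hinv : x n i * x n k ^ 2 * (x n i)⁻¹ = (x n i)⁻¹ * x n k ^ 2 * x n i := calc
    x n i * x n k ^ 2 * (x n i)⁻¹
      = (x n i)⁻¹ * (x n i ^ 2 * x n k ^ 2 * (x n i ^ 2)⁻¹) * x n i := by simp only [sq]; group
    _ = (x n i)⁻¹ * x n k ^ 2 * x n i := by rw [(commute_sq_sq i k).eq, mul_inv_cancel_right]
  exact ⟨hinv ▸ hconj, hconj⟩

theorem mem_sqSubgroup_of_transl_mem (𝔞 : MM n) {g : HW n} (h : transl 𝔞 g ∈ sqSubgroup n) :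
    g ∈ sqSubgroup n := by
  have hquot : (QuotientGroup.mk' (sqSubgroup n)).comp (transl 𝔞) = QuotientGroup.mk' _ :=
    PresentedGroup.ext fun i => by
      change QuotientGroup.mk' _ (transl 𝔞 (x n i)) = QuotientGroup.mk' _ (x n i)
      have h1 : QuotientGroup.mk' (sqSubgroup n) (sqPow (𝔞 i)) = 1 :=
        (QuotientGroup.eq_one_iff _).2 (sqPow_mem_sqSubgroup _)
      rw [transl_x, map_mul, aElt_eq_sqPow, h1, mul_one]
  rw [← QuotientGroup.ker_mk' (sqSubgroup n), MonoidHom.mem_ker] at h ⊢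
  rwa [← MonoidHom.comp_apply, hquot] at h

def generatorPerm (i : Fin n) : Equiv.Perm (Fin n → ℤ) where
  toFun v k := if k = i then v k + 1 else -v k
  invFun v k := if k = i then v k - 1 else -v k
  left_inv v := by funext k; dsimp only; split_ifs <;> simp
  right_inv v := by funext k; dsimp only; split_ifs <;> simp

theorem generatorPerm_sq (i : Fin n) : generatorPerm i ^ 2 = Equiv.addRight (Pi.single i 2) := by
  ext v k
  simp only [sq, Equiv.Perm.mul_apply, generatorPerm, Equiv.coe_fn_mk, Equiv.coe_addRight,
    Pi.add_apply, Pi.single_apply]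
  split_ifs <;> ring

def affineRep (n : ℕ) : HW n →* Equiv.Perm (Fin n → ℤ) :=
  PresentedGroup.toGroup (f := generatorPerm) <| by
    rintro _ ⟨i, j, h, rfl⟩
    simp only [map_mul, map_inv, map_pow, FreeGroup.lift_apply_of, generatorPerm_sq]
    rw [mul_assoc, mul_assoc, inv_mul_eq_one]
    ext v k
    simp only [Equiv.Perm.mul_apply, generatorPerm, Equiv.coe_fn_mk, Equiv.coe_addRight,
      Pi.add_apply, Pi.single_apply]
    split_ifs <;> simp_all

theorem affineRep_sq (k : Fin n) : affineRep n (x n k ^ 2) = Equiv.addRight (Pi.single k 2) := by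
  rw [map_pow, ← generatorPerm_sq]
  exact congrArg (· ^ 2) (PresentedGroup.toGroup.of _)

theorem isUnit_one_add_two_mul_diag_of_surjective_transl {𝔞 : MM n}
    (h : Function.Surjective (transl 𝔞)) (j : Fin n) : IsUnit (1 + 2 * 𝔞 j j) := by
  obtain ⟨g, hg⟩ := h (x n j ^ 2)
  have hgA : g ∈ sqSubgroup n := mem_sqSubgroup_of_transl_mem 𝔞 (hg ▸ sq_mem_sqSubgroup j)
  let S : AddSubgroup (Fin n → ℤ) := (AddSubgroup.zmultiples (2 * (1 + 2 * 𝔞 j j))).comap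
    (Pi.evalAddMonoidHom (fun _ => ℤ) j)
  have hA : sqSubgroup n ≤
      (Equiv.Perm.displacementSubgroup S).comap ((affineRep n).comp (transl 𝔞)) := by
    refine (Subgroup.closure_le _).2 ?_
    rintro _ ⟨k, rfl⟩
    simp only [SetLike.mem_coe, Subgroup.mem_comap, MonoidHom.comp_apply, transl_sq, map_zpow,
      affineRep_sq, Equiv.zsmul_addRight, Equiv.addRight_mem_displacementSubgroup, S,
      AddSubgroup.mem_comap, Pi.evalAddMonoidHom_apply, Int.mem_zmultiples_iff]
    rcases eq_or_ne j k with rfl | hjk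
    · simp [mul_comm]
    · simp [hjk]
  have hdvd : 2 * (1 + 2 * 𝔞 j j) ∣ 2 * 1 := by
    simpa only [Subgroup.mem_comap, MonoidHom.comp_apply, hg, affineRep_sq,
      Equiv.addRight_mem_displacementSubgroup, S, AddSubgroup.mem_comap,
      Pi.evalAddMonoidHom_apply, Int.mem_zmultiples_iff, Pi.single_eq_same, mul_one] using hA hgA
  exact isUnit_of_dvd_one ((mul_dvd_mul_iff_left two_ne_zero).1 hdvd)

end HW

/-- the group of units of `(M_n(ℤ), *)` consists exactly of the matrices
whose diagonal entries lie in `{0, -1}`; moreover a translation endomorphism `t_𝔞`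
is an automorphism of `G_n` if and only if `𝔞` is a unit. -/
theorem stmt4 (n : ℕ) :
    (∀ 𝔞 : MM n, IsUnit 𝔞 ↔ ∀ i, 𝔞 i i = 0 ∨ 𝔞 i i = -1) ∧
    (∀ (𝔞 : MM n) (f : HW n →* HW n), (∀ i, f (x n i) = x n i * aElt n 𝔞 i) →
      (Function.Bijective f ↔ IsUnit 𝔞)) := by
  refine ⟨fun 𝔞 => ?_, fun 𝔞 f hf => ?_⟩
  · simp only [MM.isUnit_iff_forall_isUnit_one_add_two_mul_diag, Int.isUnit_one_add_two_mul_iff]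
  · obtain rfl := HW.eq_transl hf
    exact ⟨fun hbij => MM.isUnit_iff_forall_isUnit_one_add_two_mul_diag.2
      (HW.isUnit_one_add_two_mul_diag_of_surjective_transl hbij.2),
      HW.bijective_transl_of_isUnit⟩
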